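/- arXiv:1509.07352 — 2 statements merged into one kernel-verified Lean document; each statement's English description precedes it below -/
import Mathlib

section
/- For integers r ≥ 3, j ≥ 1, and all n ≥ 0, p^{r−3}_{j−1}(n) = Σ_{s=0}^{n} C(n,s) (−1)^s (2·3^s − 2^s) · p^r_j(n−s). -/
/-!
Write `a = r - 3` and `b = j - 1`. Expanding `(x - 3)^n` and `(x - 2)^n` binomially in the
summands of the series turns the right-hand side into `2 p^a_{b+1}(n) - p^{a+1}_{b+1}(n)`.
That this equals `p^a_b(n)` is the identity `e^{am}/(2-e^m)^b = (2 - e^m) e^{am}/(2-e^m)^{b+1}`,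
which on the series is Pascal's rule `C(b+s+1, s+1) = C(b+s, s+1) + C(b+s, s)`.
-/

/-- `p r j n` : the number of restricted barred preferential arrangements of an `n`-set with
`r` restricted sections and `j` free sections, given by the convergent series
`p^r_j(n) = \sum_{s=0}^\infty C(j+s-1, s) (r+s)^n / 2^(j+s)`
(the coefficient of `m^n/n!` in `e^{rm}/(2-e^m)^j`). -/
noncomputable def p (r j n : ℕ) : ℝ :=
  ∑' s : ℕ, ((j + s - 1).choose s : ℝ) * ((r + s : ℕ) : ℝ) ^ n / 2 ^ (j + s)

open Finset

noncomputable def pTerm (a b n s : ℕ) : ℝ :=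
  ((b + s - 1).choose s : ℝ) * ((a + s : ℕ) : ℝ) ^ n / 2 ^ (b + s)

lemma p_eq_tsum_pTerm (a b n : ℕ) : p a b n = ∑' s, pTerm a b n s := rfl

lemma pTerm_eq (a b n s : ℕ) :
    pTerm a b n s = ((b + s - 1).choose s / 2 ^ (b + s) : ℝ) * ((a + s : ℕ) : ℝ) ^ n := by
  rw [pTerm]
  ring

lemma choose_add_sub_one_le_pow (b s : ℕ) : (b + s - 1).choose s ≤ (b + s) ^ b :=
  calc (b + s - 1).choose s ≤ (b + s).choose s := Nat.choose_le_choose s (Nat.sub_le _ _)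
    _ = (b + s).choose b := Nat.choose_symm_add.symm
    _ ≤ (b + s) ^ b := Nat.choose_le_pow _ _

lemma summable_add_pow_mul_half_pow (c K : ℕ) :
    Summable fun s : ℕ => ((s + c : ℕ) : ℝ) ^ K * (1 / 2 : ℝ) ^ s := by
  have hshift : Summable fun s : ℕ => ((s + c : ℕ) : ℝ) ^ K * (1 / 2 : ℝ) ^ (s + c) :=
    (summable_nat_add_iff c).2 <|
      summable_pow_mul_geometric_of_norm_lt_one (r := (1 / 2 : ℝ)) K (by norm_num)
  refine (hshift.mul_left (2 ^ c)).congr fun s => ?_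
  rw [pow_add, mul_left_comm, mul_left_comm _ ((1 / 2 : ℝ) ^ s), ← mul_pow]
  norm_num

lemma pTerm_le (a b n s : ℕ) :
    pTerm a b n s ≤ ((s + (a + b) : ℕ) : ℝ) ^ (b + n) * (1 / 2 : ℝ) ^ s := by
  have hchoose : ((b + s - 1).choose s : ℝ) ≤ ((s + (a + b) : ℕ) : ℝ) ^ b := by
    exact_mod_cast (choose_add_sub_one_le_pow b s).trans (Nat.pow_le_pow_left (by omega) b)
  have hpow : ((a + s : ℕ) : ℝ) ^ n ≤ ((s + (a + b) : ℕ) : ℝ) ^ n :=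
    pow_le_pow_left₀ (by positivity) (by exact_mod_cast (by omega : a + s ≤ s + (a + b))) n
  have htwo : (1 : ℝ) / 2 ^ (b + s) ≤ (1 / 2 : ℝ) ^ s := by
    rw [one_div_pow]
    exact one_div_le_one_div_of_le (by positivity) (pow_le_pow_right₀ (by norm_num) (by omega))
  calc pTerm a b n s
      = ((b + s - 1).choose s : ℝ) * ((a + s : ℕ) : ℝ) ^ n * (1 / 2 ^ (b + s)) := by
        rw [pTerm, mul_one_div]
    _ ≤ ((s + (a + b) : ℕ) : ℝ) ^ b * ((s + (a + b) : ℕ) : ℝ) ^ n * (1 / 2 : ℝ) ^ s := by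
        gcongr
    _ = ((s + (a + b) : ℕ) : ℝ) ^ (b + n) * (1 / 2 : ℝ) ^ s := by rw [pow_add]

lemma summable_pTerm (a b n : ℕ) : Summable (pTerm a b n) :=
  (summable_add_pow_mul_half_pow (a + b) (b + n)).of_nonneg_of_le
    (fun s => by unfold pTerm; positivity) (pTerm_le a b n)

lemma two_mul_pTerm_succ_zero (a b n : ℕ) : 2 * pTerm a (b + 1) n 0 = pTerm a b n 0 := by
  simp only [pTerm, Nat.choose_zero_right, add_zero, pow_succ]
  field_simp

lemma two_mul_pTerm_succ_succ (a b n t : ℕ) :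
    2 * pTerm a (b + 1) n (t + 1) = pTerm a b n (t + 1) + pTerm (a + 1) (b + 1) n t := by
  have hchoose : (b + 1 + (t + 1) - 1).choose (t + 1)
      = (b + (t + 1) - 1).choose (t + 1) + (b + 1 + t - 1).choose t := by
    rw [show b + 1 + (t + 1) - 1 = (b + t) + 1 by omega, Nat.choose_succ_succ',
      show b + (t + 1) - 1 = b + t by omega, show b + 1 + t - 1 = b + t by omega, add_comm]
  unfold pTerm
  rw [hchoose, show a + 1 + t = a + (t + 1) by omega,
    show b + 1 + (t + 1) = (b + (t + 1)) + 1 by omega, show b + 1 + t = b + (t + 1) by omega,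
    pow_succ]
  push_cast
  field_simp

lemma p_eq_two_mul_sub (a b n : ℕ) : p a b n = 2 * p a (b + 1) n - p (a + 1) (b + 1) n := by
  have hsum := summable_pTerm a (b + 1) n
  have hshift := (summable_nat_add_iff 1).2 (summable_pTerm a b n)
  have hsplit : 2 * p a (b + 1) n = p a b n + p (a + 1) (b + 1) n := by
    simp only [p_eq_tsum_pTerm]
    rw [← tsum_mul_left, (hsum.mul_left 2).tsum_eq_zero_add,
      (summable_pTerm a b n).tsum_eq_zero_add, two_mul_pTerm_succ_zero,
      tsum_congr (two_mul_pTerm_succ_succ a b n),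
      hshift.tsum_add (summable_pTerm (a + 1) (b + 1) n), add_assoc]
  linarith

lemma sum_choose_mul_neg_one_pow_mul_pow (x : ℝ) (n : ℕ) :
    ∑ s ∈ range (n + 1), (n.choose s : ℝ) * (-1) ^ s * (2 * 3 ^ s - 2 ^ s) * x ^ (n - s)
      = 2 * (x - 3) ^ n - (x - 2) ^ n := by
  rw [sub_eq_neg_add x 3, sub_eq_neg_add x 2, add_pow, add_pow, mul_sum, ← sum_sub_distrib]
  refine sum_congr rfl fun s _ => ?_
  rw [neg_pow (3 : ℝ), neg_pow (2 : ℝ)]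
  ring

lemma sum_choose_mul_neg_one_pow_mul_pTerm (a b n t : ℕ) :
    ∑ s ∈ range (n + 1),
        (n.choose s : ℝ) * (-1) ^ s * (2 * 3 ^ s - 2 ^ s) * pTerm (a + 3) b (n - s) t
      = 2 * pTerm a b n t - pTerm (a + 1) b n t := by
  simp only [pTerm_eq, mul_left_comm _ ((b + t - 1).choose t / 2 ^ (b + t) : ℝ), ← mul_sum,
    sum_choose_mul_neg_one_pow_mul_pow]
  push_cast
  ring

lemma sum_choose_mul_neg_one_pow_mul_p (a b n : ℕ) :
    ∑ s ∈ range (n + 1), (n.choose s : ℝ) * (-1) ^ s * (2 * 3 ^ s - 2 ^ s) * p (a + 3) b (n - s)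
      = 2 * p a b n - p (a + 1) b n := by
  simp only [p_eq_tsum_pTerm, ← tsum_mul_left]
  rw [← Summable.tsum_finsetSum fun s _ => (summable_pTerm _ _ _).mul_left _,
    tsum_congr (sum_choose_mul_neg_one_pow_mul_pTerm a b n),
    ((summable_pTerm a b n).mul_left 2).tsum_sub (summable_pTerm (a + 1) b n)]

theorem stmt12 (r j : ℕ) (hr : 3 ≤ r) (hj : 1 ≤ j) (n : ℕ) :
    p (r - 3) (j - 1) n = ∑ s ∈ Finset.range (n + 1),
      (n.choose s : ℝ) * (-1) ^ s * (2 * 3 ^ s - 2 ^ s) * p r j (n - s) := by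
  obtain ⟨a, rfl⟩ : ∃ a, r = a + 3 := ⟨r - 3, by omega⟩
  obtain ⟨b, rfl⟩ : ∃ b, j = b + 1 := ⟨j - 1, by omega⟩
  rw [sum_choose_mul_neg_one_pow_mul_p, Nat.add_sub_cancel, Nat.add_sub_cancel, p_eq_two_mul_sub]
end

section
/- For integers r ≥ 3+b (with b ≥ 0), j ≥ 1, and all n ≥ 0, p^{r−(3+b)}_{j−1}(n) = Σ_{s=0}^{n} C(n,s) p^r_j(s) · (−1)^{n−s} (2(3+b)^{n−s} − (2+b)^{n−s}). -/
open Finset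

lemma summable_add_one_pow_mul_half_pow (k : ℕ) :
    Summable fun s : ℕ => ((s : ℝ) + 1) ^ k * (1 / 2) ^ s := by
  have h := (summable_nat_add_iff 1).2
    (summable_pow_mul_geometric_of_norm_lt_one k (r := (1 / 2 : ℝ)) (by norm_num))
  refine (h.mul_left 2).congr fun s => ?_
  push_cast
  ring

lemma choose_add_sub_one_le (j s : ℕ) : (j + s - 1).choose s ≤ (s + 1) ^ (j - 1) :=
  calc (j + s - 1).choose s ≤ (s + (j - 1)).choose s := Nat.choose_le_choose s (by omega)
    _ = (s + (j - 1)).choose (j - 1) := Nat.choose_symm_add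
    _ ≤ (s + 1) ^ (j - 1) := Nat.choose_add_le_add_one_pow s (j - 1)

lemma summable_p_summand (r j n : ℕ) :
    Summable fun s : ℕ => ((j + s - 1).choose s : ℝ) * ((r + s : ℕ) : ℝ) ^ n / 2 ^ (j + s) := by
  refine .of_nonneg_of_le (fun s => by positivity) (fun s => ?_)
    ((summable_add_one_pow_mul_half_pow (j - 1 + n)).mul_left (((r : ℝ) + 1) ^ n))
  have hchoose : ((j + s - 1).choose s : ℝ) ≤ ((s : ℝ) + 1) ^ (j - 1) := by
    exact_mod_cast choose_add_sub_one_le j s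
  have hbase : ((r + s : ℕ) : ℝ) ^ n ≤ ((r : ℝ) + 1) ^ n * ((s : ℝ) + 1) ^ n := by
    rw [← mul_pow]
    gcongr
    push_cast
    nlinarith [(s.cast_nonneg : (0 : ℝ) ≤ s), (r.cast_nonneg : (0 : ℝ) ≤ r)]
  have htwo : (1 : ℝ) / 2 ^ (j + s) ≤ (1 / 2) ^ s := by
    rw [one_div_pow]
    gcongr
    · norm_num
    · omega
  calc ((j + s - 1).choose s : ℝ) * ((r + s : ℕ) : ℝ) ^ n / 2 ^ (j + s)
      = ((j + s - 1).choose s : ℝ) * ((r + s : ℕ) : ℝ) ^ n * (1 / 2 ^ (j + s)) := by ring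
    _ ≤ ((s : ℝ) + 1) ^ (j - 1) * (((r : ℝ) + 1) ^ n * ((s : ℝ) + 1) ^ n) * (1 / 2) ^ s := by
      gcongr
    _ = ((r : ℝ) + 1) ^ n * (((s : ℝ) + 1) ^ (j - 1 + n) * (1 / 2) ^ s) := by ring

lemma p_add_p_succ_succ (a c n : ℕ) : p a c n + p (a + 1) (c + 1) n = 2 * p a (c + 1) n := by
  unfold p
  rw [(summable_p_summand a c n).tsum_eq_zero_add,
    (summable_p_summand a (c + 1) n).tsum_eq_zero_add, mul_add, add_assoc,
    ← ((summable_nat_add_iff 1).2 (summable_p_summand a c n)).tsum_add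
      (summable_p_summand (a + 1) (c + 1) n), ← tsum_mul_left]
  congr 1
  · simp only [add_zero, Nat.choose_zero_right, Nat.cast_one, pow_succ]
    ring
  · congr 1 with t
    have hpascal :
        ((c + t + 1).choose (t + 1) : ℝ) = (c + t).choose t + (c + t).choose (t + 1) := by
      exact_mod_cast Nat.choose_succ_succ' (c + t) t
    rw [show c + 1 + (t + 1) - 1 = c + t + 1 by omega, show c + (t + 1) - 1 = c + t by omega,
      show c + 1 + t - 1 = c + t by omega, hpascal]
    push_cast
    ring

lemma sum_choose_mul_p_add_mul_neg_pow (a e j n : ℕ) :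
    ∑ s ∈ range (n + 1), (n.choose s : ℝ) * p (a + e) j s * (-(e : ℝ)) ^ (n - s) = p a j n := by
  unfold p
  simp_rw [← tsum_mul_left, ← tsum_mul_right]
  rw [← Summable.tsum_finsetSum fun s _ =>
    ((summable_p_summand (a + e) j s).mul_left _).mul_right _]
  refine tsum_congr fun t => ?_
  have hbinom := add_pow ((a + e + t : ℕ) : ℝ) (-(e : ℝ)) n
  rw [show ((a + e + t : ℕ) : ℝ) + -(e : ℝ) = ((a + t : ℕ) : ℝ) by push_cast; ring] at hbinom
  rw [hbinom, mul_div_right_comm, mul_sum]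
  refine sum_congr rfl fun s _ => ?_
  ring

theorem stmt16 (b r j : ℕ) (hr : 3 + b ≤ r) (hj : 1 ≤ j) (n : ℕ) :
    p (r - (3 + b)) (j - 1) n = ∑ s ∈ Finset.range (n + 1),
      (n.choose s : ℝ) * p r j s * (-1) ^ (n - s) *
        (2 * ((3 : ℝ) + b) ^ (n - s) - ((2 : ℝ) + b) ^ (n - s)) := by
  obtain ⟨a, rfl⟩ : ∃ a, r = a + (3 + b) := ⟨r - (3 + b), by omega⟩
  obtain ⟨c, rfl⟩ : ∃ c, j = c + 1 := ⟨j - 1, by omega⟩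
  have hshift3 := sum_choose_mul_p_add_mul_neg_pow a (3 + b) (c + 1) n
  have hshift2 := sum_choose_mul_p_add_mul_neg_pow (a + 1) (2 + b) (c + 1) n
  rw [show a + 1 + (2 + b) = a + (3 + b) by omega] at hshift2
  rw [Nat.add_sub_cancel, Nat.add_sub_cancel, eq_sub_of_add_eq (p_add_p_succ_succ a c n),
    ← hshift3, ← hshift2, mul_sum, ← sum_sub_distrib]
  refine sum_congr rfl fun s _ => ?_
  rw [neg_pow ((3 + b : ℕ) : ℝ), neg_pow ((2 + b : ℕ) : ℝ)]
  push_cast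
  ring
end
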